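/- arXiv:2102.08089 — 2 statements merged into one kernel-verified Lean document; each statement's English description precedes it below -/
import Mathlib

section
/- Let φ ∈ OR and let real numbers s₀ < s₁ and positive numbers c₀, c₁ satisfy c₀·λ^{s₀} ≤ φ(λt)/φ(t) ≤ c₁·λ^{s₁} for all t ≥ 1 and λ ≥ 1. Define ψ : (0,∞) → (0,∞) by ψ(τ) := τ^{−s₀/(s₁−s₀)}·φ(τ^{1/(s₁−s₀)}) for τ ≥ 1 and ψ(τ) := φ(1) for 0 < τ < 1. Then ψ belongs to the class B and is pseudoconcave in a neighbourhood of infinity (equivalently, ψ is an interpolation parameter). -/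
/-!
Substituting `τ = t^{s₁-s₀}` turns the bounds `c₀ λ^{s₀} ≤ φ(λt)/φ(t) ≤ c₁ λ^{s₁}` into
`c₀ ≤ ψ(λτ)/ψ(τ) ≤ c₁ λ`: `ψ` is almost increasing and `ψ(τ)/τ` is almost decreasing.
Such a `ψ` is comparable to the infimum of the affine functions `t ↦ ψ(τ) (1 + t/τ)`, `τ ≥ 1`,
which is concave: the choice `τ = t` bounds it by `2ψ(t)`, and the two monotonicity properties
bound every term below by a multiple of `ψ(t)`, according as `τ ≤ t` or `τ ≥ t`.
Membership in `B` follows from `c₀ ψ(1) ≤ ψ(t) ≤ c₁ t ψ(1)` for `t ≥ 1`.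
-/

open MeasureTheory Filter Set

/-- A Borel measurable function `φ : [1,∞) → (0,∞)` is OR-varying at infinity:
there exist `a > 1` and `c ≥ 1` with `c⁻¹ ≤ φ(λt)/φ(t) ≤ c` for all `t ≥ 1`, `λ ∈ [1,a]`. -/
def ORClass (φ : ℝ → ℝ) : Prop :=
  Measurable φ ∧ (∀ t, 1 ≤ t → 0 < φ t) ∧
    ∃ a > 1, ∃ c ≥ 1, ∀ t, 1 ≤ t → ∀ l, 1 ≤ l → l ≤ a →
      c⁻¹ ≤ φ (l * t) / φ t ∧ φ (l * t) / φ t ≤ c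

/-- The class `B` of Borel measurable functions `ψ : (0,∞) → (0,∞)` that are bounded on each
compact interval `[a,b] ⊂ (0,∞)` and such that `1/ψ` is bounded on each ray `[r,∞)`, `r > 0`. -/
def BClass (ψ : ℝ → ℝ) : Prop :=
  Measurable ψ ∧ (∀ t, 0 < t → 0 < ψ t) ∧
    (∀ a b : ℝ, 0 < a → a < b → ∃ M, ∀ t, a ≤ t → t ≤ b → ψ t ≤ M) ∧
    (∀ r : ℝ, 0 < r → ∃ M, ∀ t, r ≤ t → 1 / ψ t ≤ M)

/-- `ψ` is pseudoconcave in a neighbourhood of infinity: there are `r > 0` and a concave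
function `ψ₁ : (r,∞) → (0,∞)` such that `ψ/ψ₁` and `ψ₁/ψ` are bounded on `(r,∞)`. -/
def PseudoconcaveAtTop (ψ : ℝ → ℝ) : Prop :=
  ∃ r > (0 : ℝ), ∃ ψ₁ : ℝ → ℝ, (∀ t, r < t → 0 < ψ₁ t) ∧
    ConcaveOn ℝ (Set.Ioi r) ψ₁ ∧
    ∃ M : ℝ, ∀ t, r < t → ψ t / ψ₁ t ≤ M ∧ ψ₁ t / ψ t ≤ M


def HasIndexBounds (φ : ℝ → ℝ) (s₀ s₁ c₀ c₁ : ℝ) : Prop :=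
  ∀ t : ℝ, 1 ≤ t → ∀ l : ℝ, 1 ≤ l → c₀ * l ^ s₀ ≤ φ (l * t) / φ t ∧ φ (l * t) / φ t ≤ c₁ * l ^ s₁

/-- The parameter `ψ` built from `φ` in the theorem. -/
noncomputable def normalizeIndices (φ : ℝ → ℝ) (s₀ s₁ τ : ℝ) : ℝ :=
  if 1 ≤ τ then τ ^ (-(s₀ / (s₁ - s₀))) * φ (τ ^ (1 / (s₁ - s₀))) else φ 1

theorem ConcaveOn.ciInf {ι E : Type*} [Nonempty ι] [AddCommMonoid E] [Module ℝ E] {s : Set E}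
    {f : ι → E → ℝ} (hf : ∀ i, ConcaveOn ℝ s (f i))
    (hbdd : ∀ x ∈ s, BddBelow (range fun i => f i x)) :
    ConcaveOn ℝ s fun x => ⨅ i, f i x := by
  refine ⟨(hf (Classical.arbitrary ι)).1, fun x hx y hy a b ha hb hab => le_ciInf fun i => ?_⟩
  calc _ ≤ a • f i x + b • f i y := by
        simp only [smul_eq_mul]
        gcongr
        exacts [ciInf_le (hbdd x hx) i, ciInf_le (hbdd y hy) i]
    _ ≤ f i (a • x + b • y) := (hf i).2 hx hy ha hb hab

namespace HasIndexBounds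

variable {φ ψ : ℝ → ℝ} {s₀ s₁ c₀ c₁ : ℝ}

theorem congr (h : HasIndexBounds φ s₀ s₁ c₀ c₁) (hφψ : EqOn φ ψ (Ici 1)) :
    HasIndexBounds ψ s₀ s₁ c₀ c₁ := by
  intro t ht l hl
  rw [← hφψ (mem_Ici.2 ht), ← hφψ (mem_Ici.2 (one_le_mul_of_one_le_of_one_le hl ht))]
  exact h t ht l hl

theorem rpow_mul_comp_rpow (h : HasIndexBounds φ s₀ s₁ c₀ c₁) {ε : ℝ} (hε : 0 < ε) (σ : ℝ) :
    HasIndexBounds (fun τ => τ ^ σ * φ (τ ^ ε)) (ε * s₀ + σ) (ε * s₁ + σ) c₀ c₁ := by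
  intro t ht l hl
  have ht₀ : 0 < t := zero_lt_one.trans_le ht
  have hl₀ : 0 < l := zero_lt_one.trans_le hl
  have hratio : (l * t) ^ σ * φ ((l * t) ^ ε) / (t ^ σ * φ (t ^ ε))
      = l ^ σ * (φ (l ^ ε * t ^ ε) / φ (t ^ ε)) := by
    rw [Real.mul_rpow hl₀.le ht₀.le, Real.mul_rpow hl₀.le ht₀.le, mul_div_mul_comm,
      mul_div_assoc, div_self (Real.rpow_pos_of_pos ht₀ σ).ne', mul_one]
  have hpow (s : ℝ) : l ^ (ε * s + σ) = l ^ σ * (l ^ ε) ^ s := by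
    rw [Real.rpow_add hl₀, ← Real.rpow_mul hl₀.le, mul_comm]
  obtain ⟨hlow, hup⟩ := h (t ^ ε) (Real.one_le_rpow ht hε.le) (l ^ ε) (Real.one_le_rpow hl hε.le)
  have hσ : 0 ≤ l ^ σ := (Real.rpow_pos_of_pos hl₀ σ).le
  rw [hratio, hpow, hpow, mul_left_comm c₀, mul_left_comm c₁]
  exact ⟨mul_le_mul_of_nonneg_left hlow hσ, mul_le_mul_of_nonneg_left hup hσ⟩

variable {τ μ : ℝ}

theorem mul_le_apply_mul (h : HasIndexBounds ψ 0 1 c₀ c₁) (hψτ : 0 < ψ τ) (hτ : 1 ≤ τ)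
    (hμ : 1 ≤ μ) : c₀ * ψ τ ≤ ψ (μ * τ) := by
  simpa [le_div_iff₀ hψτ] using (h τ hτ μ hμ).1

theorem apply_mul_le (h : HasIndexBounds ψ 0 1 c₀ c₁) (hψτ : 0 < ψ τ) (hτ : 1 ≤ τ)
    (hμ : 1 ≤ μ) : ψ (μ * τ) ≤ c₁ * μ * ψ τ := by
  simpa [div_le_iff₀ hψτ] using (h τ hτ μ hμ).2

end HasIndexBounds

noncomputable def concaveRegularization (ψ : ℝ → ℝ) (t : ℝ) : ℝ :=
  ⨅ τ : Ici (1 : ℝ), ψ τ * (1 + t / τ)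

section concaveRegularization

variable {ψ : ℝ → ℝ} {c₀ c₁ : ℝ}

theorem bddBelow_range_mul_one_add_div (hψ : ∀ τ, 1 ≤ τ → 0 ≤ ψ τ) {t : ℝ} (ht : 0 ≤ t) :
    BddBelow (range fun τ : Ici (1 : ℝ) => ψ τ * (1 + t / τ)) := by
  refine ⟨0, forall_mem_range.2 fun τ => ?_⟩
  have hτ : (1 : ℝ) ≤ τ := τ.2
  have : 0 ≤ t / τ := div_nonneg ht (zero_le_one.trans hτ)
  exact mul_nonneg (hψ τ hτ) (by linarith)

theorem concaveOn_concaveRegularization (hψ : ∀ τ, 1 ≤ τ → 0 ≤ ψ τ) :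
    ConcaveOn ℝ (Ici 0) (concaveRegularization ψ) := by
  refine ConcaveOn.ciInf (fun τ => ?_) fun t ht => bddBelow_range_mul_one_add_div hψ ht
  refine ⟨convex_Ici 0, fun x _ y _ a b _ _ hab => le_of_eq ?_⟩
  simp only [smul_eq_mul]
  linear_combination (ψ τ) * hab

theorem concaveRegularization_le_two_mul (hψ : ∀ τ, 1 ≤ τ → 0 ≤ ψ τ) {t : ℝ} (ht : 1 ≤ t) :
    concaveRegularization ψ t ≤ 2 * ψ t := by
  have h := ciInf_le (bddBelow_range_mul_one_add_div hψ (zero_le_one.trans ht)) ⟨t, ht⟩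
  rw [div_self (zero_lt_one.trans_le ht).ne'] at h
  unfold concaveRegularization
  linarith

theorem min_mul_le_concaveRegularization (h : HasIndexBounds ψ 0 1 c₀ c₁)
    (hψ : ∀ τ, 1 ≤ τ → 0 < ψ τ) (hc₁ : 0 < c₁) {t : ℝ} (ht : 1 ≤ t) :
    min c₀ c₁⁻¹ * ψ t ≤ concaveRegularization ψ t := by
  refine le_ciInf fun ⟨τ, (hτ : 1 ≤ τ)⟩ => ?_
  have hτ₀ : 0 < τ := zero_lt_one.trans_le hτ
  have ht₀ : 0 < t := zero_lt_one.trans_le ht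
  have hψt := hψ t ht
  have hψτ := hψ τ hτ
  have hdiv : 0 ≤ t / τ := div_nonneg ht₀.le hτ₀.le
  rcases le_total τ t with hτt | htτ
  · have hup := h.apply_mul_le hψτ hτ ((one_le_div hτ₀).2 hτt)
    rw [div_mul_cancel₀ t hτ₀.ne'] at hup
    calc min c₀ c₁⁻¹ * ψ t ≤ c₁⁻¹ * ψ t := by gcongr; exact min_le_right _ _
      _ ≤ t / τ * ψ τ := by rw [inv_mul_le_iff₀ hc₁]; linarith
      _ ≤ ψ τ * (1 + t / τ) := by nlinarith
  · have hlow := h.mul_le_apply_mul hψt ht ((one_le_div ht₀).2 htτ)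
    rw [div_mul_cancel₀ τ ht₀.ne'] at hlow
    calc min c₀ c₁⁻¹ * ψ t ≤ c₀ * ψ t := by gcongr; exact min_le_left _ _
      _ ≤ ψ τ * (1 + t / τ) := by nlinarith

theorem pseudoconcaveAtTop_of_hasIndexBounds (h : HasIndexBounds ψ 0 1 c₀ c₁)
    (hψ : ∀ τ, 1 ≤ τ → 0 < ψ τ) (hc₀ : 0 < c₀) (hc₁ : 0 < c₁) : PseudoconcaveAtTop ψ := by
  have hψ₀ : ∀ τ, 1 ≤ τ → 0 ≤ ψ τ := fun τ hτ => (hψ τ hτ).le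
  have hm : 0 < min c₀ c₁⁻¹ := lt_min hc₀ (inv_pos.2 hc₁)
  have hlow (t : ℝ) (ht : 1 < t) := min_mul_le_concaveRegularization h hψ hc₁ ht.le
  refine ⟨1, one_pos, concaveRegularization ψ, fun t ht => ?_, ?_, (min c₀ c₁⁻¹)⁻¹ ⊔ 2,
    fun t ht => ?_⟩
  · exact (mul_pos hm (hψ t ht.le)).trans_le (hlow t ht)
  · exact (concaveOn_concaveRegularization hψ₀).subset (Ioi_subset_Ici zero_le_one)
      (convex_Ioi 1)
  have hψt := hψ t ht.le
  have hψ₁t := (mul_pos hm hψt).trans_le (hlow t ht)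
  constructor
  · rw [div_le_iff₀ hψ₁t]
    calc ψ t = (min c₀ c₁⁻¹)⁻¹ * (min c₀ c₁⁻¹ * ψ t) := by field_simp
      _ ≤ (min c₀ c₁⁻¹)⁻¹ * concaveRegularization ψ t := by gcongr; exact hlow t ht
      _ ≤ _ := by gcongr; exact le_sup_left
  · rw [div_le_iff₀ hψt]
    exact (concaveRegularization_le_two_mul hψ₀ ht.le).trans (by gcongr; exact le_sup_right)

end concaveRegularization

theorem bClass_of_hasIndexBounds {ψ : ℝ → ℝ} {c₀ c₁ : ℝ} (hmeas : Measurable ψ)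
    (hψ : ∀ t, 0 < t → 0 < ψ t) (hconst : ∀ t, t < 1 → ψ t = ψ 1)
    (h : HasIndexBounds ψ 0 1 c₀ c₁) (hc₀ : 0 < c₀) (hc₁ : 0 < c₁) : BClass ψ := by
  have hψ₁ := hψ 1 one_pos
  have hbounds (t : ℝ) (ht : 1 ≤ t) : c₀ * ψ 1 ≤ ψ t ∧ ψ t ≤ c₁ * t * ψ 1 := by
    simpa using And.intro (h.mul_le_apply_mul hψ₁ le_rfl ht) (h.apply_mul_le hψ₁ le_rfl ht)
  refine ⟨hmeas, hψ, fun a b _ _ => ⟨ψ 1 ⊔ c₁ * b * ψ 1, fun t _ htb => ?_⟩,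
    fun r _ => ⟨(ψ 1)⁻¹ ⊔ (c₀ * ψ 1)⁻¹, fun t _ => ?_⟩⟩
  · rcases lt_or_ge t 1 with ht | ht
    · exact (hconst t ht).trans_le le_sup_left
    · calc ψ t ≤ c₁ * t * ψ 1 := (hbounds t ht).2
        _ ≤ c₁ * b * ψ 1 := by gcongr
        _ ≤ _ := le_sup_right
  · rw [one_div]
    rcases lt_or_ge t 1 with ht | ht
    · exact (hconst t ht).symm ▸ le_sup_left
    · calc (ψ t)⁻¹ ≤ (c₀ * ψ 1)⁻¹ := inv_anti₀ (by positivity) (hbounds t ht).1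
        _ ≤ _ := le_sup_right

section normalizeIndices

variable {φ : ℝ → ℝ} {s₀ s₁ c₀ c₁ : ℝ}

theorem normalizeIndices_of_lt_one {τ : ℝ} (hτ : τ < 1) : normalizeIndices φ s₀ s₁ τ = φ 1 :=
  if_neg hτ.not_ge

theorem normalizeIndices_one : normalizeIndices φ s₀ s₁ 1 = φ 1 := by
  simp [normalizeIndices]

theorem normalizeIndices_pos (hφ : ∀ t, 1 ≤ t → 0 < φ t) (hs : s₀ < s₁) {τ : ℝ} (hτ : 0 < τ) :
    0 < normalizeIndices φ s₀ s₁ τ := by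
  unfold normalizeIndices
  split_ifs with h
  · have hε : 0 ≤ 1 / (s₁ - s₀) := by have := sub_pos.2 hs; positivity
    exact mul_pos (Real.rpow_pos_of_pos hτ _) (hφ _ (Real.one_le_rpow h hε))
  · exact hφ 1 le_rfl

theorem measurable_normalizeIndices (hφ : Measurable φ) : Measurable (normalizeIndices φ s₀ s₁) :=
  Measurable.ite measurableSet_Ici
    ((measurable_id.pow_const _).mul (hφ.comp (measurable_id.pow_const _))) measurable_const

theorem HasIndexBounds.normalizeIndices (h : HasIndexBounds φ s₀ s₁ c₀ c₁) (hs : s₀ < s₁) :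
    HasIndexBounds (normalizeIndices φ s₀ s₁) 0 1 c₀ c₁ := by
  have h' := h.rpow_mul_comp_rpow (one_div_pos.2 (sub_pos.2 hs)) (-(s₀ / (s₁ - s₀)))
  rw [show 1 / (s₁ - s₀) * s₀ + -(s₀ / (s₁ - s₀)) = 0 by ring,
    show 1 / (s₁ - s₀) * s₁ + -(s₀ / (s₁ - s₀)) = 1 by
      field_simp [(sub_pos.2 hs).ne']; ring] at h'
  exact h'.congr fun τ hτ => (if_pos hτ).symm

end normalizeIndices

/-- If `φ ∈ OR` satisfies `c₀ λ^{s₀} ≤ φ(λt)/φ(t) ≤ c₁ λ^{s₁}` for all `t ≥ 1`, `λ ≥ 1`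
(with `s₀ < s₁`, `c₀,c₁ > 0`), then `ψ(τ) := τ^{-s₀/(s₁-s₀)} φ(τ^{1/(s₁-s₀)})` for `τ ≥ 1`,
`ψ(τ) := φ(1)` for `0 < τ < 1`, belongs to `B` and is pseudoconcave in a neighbourhood of
infinity (i.e. is an interpolation parameter). -/
theorem interpolation_parameter_of_regularity (φ : ℝ → ℝ) (hφ : ORClass φ)
    (s₀ s₁ : ℝ) (hs : s₀ < s₁) (c₀ c₁ : ℝ) (hc₀ : 0 < c₀) (hc₁ : 0 < c₁)
    (hest : ∀ t : ℝ, 1 ≤ t → ∀ l : ℝ, 1 ≤ l →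
      c₀ * l ^ s₀ ≤ φ (l * t) / φ t ∧ φ (l * t) / φ t ≤ c₁ * l ^ s₁) :
    BClass (fun τ => if 1 ≤ τ then τ ^ (-(s₀ / (s₁ - s₀))) * φ (τ ^ (1 / (s₁ - s₀))) else φ 1) ∧
    PseudoconcaveAtTop
      (fun τ => if 1 ≤ τ then τ ^ (-(s₀ / (s₁ - s₀))) * φ (τ ^ (1 / (s₁ - s₀))) else φ 1) := by
  obtain ⟨hmeas, hpos, -⟩ := hφ
  have hψ : HasIndexBounds (normalizeIndices φ s₀ s₁) 0 1 c₀ c₁ :=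
    HasIndexBounds.normalizeIndices hest hs
  have hψpos (t : ℝ) (ht : 0 < t) : 0 < normalizeIndices φ s₀ s₁ t :=
    normalizeIndices_pos hpos hs ht
  exact ⟨bClass_of_hasIndexBounds (measurable_normalizeIndices hmeas) hψpos
      (fun t ht => (normalizeIndices_of_lt_one ht).trans normalizeIndices_one.symm) hψ hc₀ hc₁,
    pseudoconcaveAtTop_of_hasIndexBounds hψ (fun t ht => hψpos t (zero_lt_one.trans_le ht))
      hc₀ hc₁⟩
end

section
/- Let H be a separable complex Hilbert space with a Hilbert (orthonormal) basis (e_j)_{j∈ℕ}, N a normed complex vector space, V a complex vector space, and i_H : H → V, i_N : N → V injective linear maps. Let (ω_j) and (η_j) be bounded sequences of nonzero complex numbers, let R, S : H → H be bounded linear operators with R e_j = ω_j·e_j and S e_j = η_j·e_j for all j, and let R' : H → N be a bounded linear operator with i_N(R'x) = i_H(Rx) for all x ∈ H. Then for every f in the range of R∘S the orthogonal expansion of f converges to f in N unconditionally: for every permutation σ of ℕ and every k ∈ ℕ the vector i_H(f − Σ_{j<k} ⟨f, e_{σ(j)}⟩ e_{σ(j)}) lies in the image of i_N, and the N-norms of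 its unique preimages tend to 0 as k → ∞. -/
/-!
Write `f = R x` with `x = S g`. Because `R` is diagonal in the basis `(e_j)`, it commutes with
every partial expansion: `R (x - ∑_{j ∈ s} ⟨e_j, x⟩ e_j) = f - ∑_{j ∈ s} ⟨e_j, f⟩ e_j`. Hence the
`k`-th remainder of `f` is the image under `R'` of the `k`-th remainder of `x`, which tends to `0`
in `H` in any order of summation; continuity of `R'` carries this to `N`.
-/

open Filter

open scoped InnerProductSpace Topology

namespace HilbertBasis

variable {ι 𝕜 E : Type*} [RCLike 𝕜] [NormedAddCommGroup E] [InnerProductSpace 𝕜 E]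

theorem inner_apply_of_apply_eq_smul (b : HilbertBasis ι 𝕜 E) {T : E →L[𝕜] E} {μ : ι → 𝕜}
    (hT : ∀ i, T (b i) = μ i • b i) (i : ι) (x : E) :
    ⟪b i, T x⟫_𝕜 = μ i * ⟪b i, x⟫_𝕜 := by
  classical
  suffices (innerSL 𝕜 (b i)).comp T = μ i • innerSL 𝕜 (b i) from congr($this x)
  refine ContinuousLinearMap.ext_on
    ((Submodule.dense_iff_topologicalClosure_eq_top).2 b.dense_span) ?_
  rintro _ ⟨j, rfl⟩
  simp only [ContinuousLinearMap.comp_apply, smul_apply, innerSL_apply_apply,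
    hT, inner_smul_right, orthonormal_iff_ite.mp b.orthonormal, smul_eq_mul]
  split_ifs with hij
  · rw [hij]
  · simp

theorem map_sub_sum_inner_smul (b : HilbertBasis ι 𝕜 E) {T : E →L[𝕜] E} {μ : ι → 𝕜}
    (hT : ∀ i, T (b i) = μ i • b i) {κ : Type*} (v : κ → ι) (s : Finset κ) (x : E) :
    T (x - ∑ j ∈ s, ⟪b (v j), x⟫_𝕜 • b (v j)) =
      T x - ∑ j ∈ s, ⟪b (v j), T x⟫_𝕜 • b (v j) := by
  simp only [map_sub, map_sum, map_smul, hT, smul_smul, b.inner_apply_of_apply_eq_smul hT,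
    mul_comm]

theorem tendsto_sub_sum_inner_smul (b : HilbertBasis ι 𝕜 E) (σ : ℕ ≃ ι) (x : E) :
    Tendsto (fun k => x - ∑ j ∈ Finset.range k, ⟪b (σ j), x⟫_𝕜 • b (σ j)) atTop (𝓝 0) := by
  have hsum : HasSum (fun j => ⟪b (σ j), x⟫_𝕜 • b (σ j)) x := by
    simpa only [Function.comp_def, b.repr_apply_apply] using σ.hasSum_iff.2 (b.hasSum_repr x)
  simpa using (tendsto_const_nhds (x := x)).sub hsum.tendsto_sum_nat

end HilbertBasis

theorem spectral_expansion_unconditional_convergence_general {H : Type*} [NormedAddCommGroup H]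
    [InnerProductSpace ℂ H]
    {N : Type*} [NormedAddCommGroup N] [NormedSpace ℂ N]
    {V : Type*} [AddCommGroup V] [Module ℂ V]
    (iH : H →ₗ[ℂ] V)
    (iN : N →ₗ[ℂ] V)
    (e : HilbertBasis ℕ ℂ H)
    (ω : ℕ → ℂ)
    (R S : H →L[ℂ] H) (hRe : ∀ j, R (e j) = ω j • e j)
    (R' : H →L[ℂ] N) (hR' : ∀ x : H, iN (R' x) = iH (R x))
    (f : H) (hf : ∃ g : H, f = R (S g)) :
    ∀ σ : Equiv.Perm ℕ, ∃ h : ℕ → N,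
      (∀ k : ℕ, iN (h k) =
        iH (f - ∑ j ∈ Finset.range k, (inner ℂ (e (σ j)) f : ℂ) • e (σ j))) ∧
      Tendsto (fun k : ℕ => ‖h k‖) atTop (nhds 0) := by
  obtain ⟨g, rfl⟩ := hf
  intro σ
  refine ⟨fun k => R' (S g - ∑ j ∈ Finset.range k, ⟪e (σ j), S g⟫_ℂ • e (σ j)), fun k => ?_, ?_⟩
  · rw [hR', e.map_sub_sum_inner_smul hRe]
  · simpa using ((R'.continuous.tendsto 0).comp (e.tendsto_sub_sum_inner_smul σ (S g))).norm

/-- Convergence conclusion of Theorem 6.5: with `H`, `N` embedded in `V`, a Hilbert basis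
`(e_j)` of `H`, diagonal bounded operators `R, S` with bounded nonzero eigenvalue sequences,
and `R' : H → N` bounded with `i_N (R' x) = i_H (R x)`, for every `f` in the range of `R∘S`
the orthogonal expansion of `f` converges to `f` in `N` unconditionally: for every
permutation `σ` of `ℕ`, the remainders `i_H (f - ∑_{j<k} ⟨e_{σ(j)}, f⟩ e_{σ(j)})` have
preimages in `N` whose norms tend to `0`. -/
theorem spectral_expansion_unconditional_convergence {H : Type*} [NormedAddCommGroup H]
    [InnerProductSpace ℂ H] [CompleteSpace H] [TopologicalSpace.SeparableSpace H]
    {N : Type*} [NormedAddCommGroup N] [NormedSpace ℂ N]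
    {V : Type*} [AddCommGroup V] [Module ℂ V]
    (iH : H →ₗ[ℂ] V) (hiH : Function.Injective iH)
    (iN : N →ₗ[ℂ] V) (hiN : Function.Injective iN)
    (e : HilbertBasis ℕ ℂ H)
    (ω η : ℕ → ℂ) (hωbdd : ∃ M : ℝ, ∀ j, ‖ω j‖ ≤ M) (hηbdd : ∃ M : ℝ, ∀ j, ‖η j‖ ≤ M)
    (hω : ∀ j, ω j ≠ 0) (hη : ∀ j, η j ≠ 0)
    (R S : H →L[ℂ] H) (hRe : ∀ j, R (e j) = ω j • e j) (hSe : ∀ j, S (e j) = η j • e j)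
    (R' : H →L[ℂ] N) (hR' : ∀ x : H, iN (R' x) = iH (R x))
    (f : H) (hf : ∃ g : H, f = R (S g)) :
    ∀ σ : Equiv.Perm ℕ, ∃ h : ℕ → N,
      (∀ k : ℕ, iN (h k) =
        iH (f - ∑ j ∈ Finset.range k, (inner ℂ (e (σ j)) f : ℂ) • e (σ j))) ∧
      Tendsto (fun k : ℕ => ‖h k‖) atTop (nhds 0) :=
  spectral_expansion_unconditional_convergence_general iH iN e ω R S hRe R' hR' f hf
end
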